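/- Suppose F is continuous and 0 < F(y) < 1 for all y ∈ (0,1). Let m ≥ 2 be an integer, x ∈ (0,1) and ε > 0. Write q_m(x) = 1 − x^m − (1−x)^m and B_m(σ²(F);x) = Σ_{k=0}^m F(k/m)(1 − F(k/m)) p_{m,k}(x). Then P( |B_m(Y_n;x) − F(x)| ≥ ε·B_m(σ²(F);x) + |B_m(F;x) − F(x)| ) ≤ 2 exp( −(n/q_m(x))·B_m(σ²(F);x)·τ(ε) ). -/

import Mathlib

open Set Finset MeasureTheory ProbabilityTheory

/-- Bernstein basis polynomial `p_{m,k}(x) = C(m,k) x^k (1-x)^{m-k}`. -/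
noncomputable def bern (m k : ℕ) (x : ℝ) : ℝ :=
  (m.choose k : ℝ) * x ^ k * (1 - x) ^ (m - k)

/-- The `m`-th Bernstein polynomial of `f`. -/
noncomputable def Bpoly (m : ℕ) (f : ℝ → ℝ) (x : ℝ) : ℝ :=
  ∑ k ∈ Finset.range (m + 1), f ((k : ℝ) / m) * bern m k x

/-- Empirical distribution function `Y_n(x) = (1/n) Σ_r 1{X_r ≤ x}`. -/
noncomputable def empY {Ω : Type*} (n : ℕ) (X : Fin n → Ω → ℝ) (x : ℝ) (ω : Ω) : ℝ :=
  (1 / n : ℝ) * ∑ r, (if X r ω ≤ x then (1 : ℝ) else 0)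

/-- Random Bernstein polynomial `B_m(Y_n;x)`, as a function of `x` for each `ω`. -/
noncomputable def BY {Ω : Type*} (m n : ℕ) (X : Fin n → Ω → ℝ) (ω : Ω) (x : ℝ) : ℝ :=
  ∑ k ∈ Finset.range (m + 1), empY n X ((k : ℝ) / m) ω * bern m k x

/-- `τ(ε) = (1+ε) log(1+ε) - ε`. -/
noncomputable def tau (ε : ℝ) : ℝ := (1 + ε) * Real.log (1 + ε) - ε

/-!
Put `Z_r = Σ_k (1{X_r ≤ k/m} − F(k/m)) p_{m,k}(x)`, so that `n (B_m(Y_n;x) − B_m(F;x)) = Σ_r Z_r`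
with `Z_r` i.i.d. and centred. Almost surely `X_r ∈ (0,1]`, and `F(0) = 0`, `F(1) = 1`, so the
terms `k = 0, m` vanish: hence `|Z_r| ≤ Σ_{0<k<m} p_{m,k}(x) = q_m(x)` and, by Cauchy–Schwarz with
the weights `p_{m,k}(x)`, `E Z_r² ≤ q_m(x) B_m(σ²(F);x)`. Bennett's inequality for the bounded
centred sum gives the tail bound, and the triangle inequality absorbs the bias `|B_m(F;x) − F(x)|`.
-/

theorem Real.exp_le_one_add_add_sq_div_mul {y c : ℝ} (hc : 0 < c) (hy : |y| ≤ c) :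
    Real.exp y ≤ 1 + y + y ^ 2 / c ^ 2 * (Real.exp c - 1 - c) := by
  have tail (z : ℝ) :
      HasSum (fun n : ℕ => z ^ (n + 2) / (n + 2).factorial) (Real.exp z - 1 - z) := by
    have h := NormedSpace.expSeries_div_hasSum_exp (𝔸 := ℝ) z
    rw [← Real.exp_eq_exp_ℝ, ← hasSum_nat_add_iff' 2] at h
    simpa [Finset.sum_range_succ, sub_sub] using h
  have hterm (n : ℕ) : y ^ (n + 2) / (n + 2).factorial ≤
      y ^ 2 / c ^ 2 * (c ^ (n + 2) / (n + 2).factorial) := by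
    rw [← mul_div_assoc]
    gcongr
    calc y ^ (n + 2) ≤ |y| ^ n * y ^ 2 := by
          rw [← sq_abs y, ← pow_add]; exact (le_abs_self _).trans (abs_pow y _).le
      _ ≤ c ^ n * y ^ 2 := by gcongr
      _ = y ^ 2 / c ^ 2 * c ^ (n + 2) := by field_simp; ring
  linarith [hasSum_le hterm (tail y) ((tail c).mul_left (y ^ 2 / c ^ 2))]

namespace ProbabilityTheory

variable {Ω : Type*} [MeasurableSpace Ω] {P : Measure Ω}

lemma integrable_exp_mul_of_ae_abs_le [IsFiniteMeasure P] {W : Ω → ℝ} (hW : AEMeasurable W P)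
    {q : ℝ} (hbd : ∀ᵐ ω ∂P, |W ω| ≤ q) (t : ℝ) :
    Integrable (fun ω => Real.exp (t * W ω)) P := by
  refine .of_bound (hW.const_mul t).exp.aestronglyMeasurable (Real.exp (|t| * q)) ?_
  filter_upwards [hbd] with ω hω
  rw [Real.norm_eq_abs, Real.abs_exp, Real.exp_le_exp]
  exact (le_abs_self _).trans (by rw [abs_mul]; gcongr)

theorem mgf_le_exp_bennett [IsProbabilityMeasure P] {W : Ω → ℝ} (hW : AEMeasurable W P)
    {q v t : ℝ} (hq : 0 < q) (ht : 0 < t) (hbd : ∀ᵐ ω ∂P, |W ω| ≤ q)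
    (hmean : ∫ ω, W ω ∂P = 0) (hvar : ∫ ω, W ω ^ 2 ∂P ≤ v) :
    mgf W P t ≤ Real.exp (v / q ^ 2 * (Real.exp (t * q) - 1 - t * q)) := by
  set g := (Real.exp (t * q) - 1 - t * q) / q ^ 2
  have hg : 0 ≤ g := div_nonneg (by linarith [Real.add_one_le_exp (t * q)]) (sq_nonneg q)
  have hWint : Integrable W P := .of_bound hW.aestronglyMeasurable q (by simpa using hbd)
  have hW2int : Integrable (fun ω => W ω ^ 2) P :=
    .of_bound (hW.pow_const 2).aestronglyMeasurable (q ^ 2) <| hbd.mono fun ω hω => by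
      rw [Real.norm_eq_abs, abs_pow]; gcongr
  have hlin : Integrable (fun ω => 1 + t * W ω) P := (integrable_const 1).add (hWint.const_mul t)
  have hpoint : ∀ᵐ ω ∂P, Real.exp (t * W ω) ≤ 1 + t * W ω + W ω ^ 2 * g := by
    filter_upwards [hbd] with ω hω
    have := Real.exp_le_one_add_add_sq_div_mul (mul_pos ht hq) (y := t * W ω)
      (by rw [abs_mul, abs_of_pos ht]; gcongr)
    convert this using 2
    simp only [g]
    field_simp
  calc mgf W P t ≤ ∫ ω, (1 + t * W ω + W ω ^ 2 * g) ∂P :=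
        integral_mono_ae (integrable_exp_mul_of_ae_abs_le hW hbd t)
          (hlin.add (hW2int.mul_const g)) hpoint
    _ = 1 + (∫ ω, W ω ^ 2 ∂P) * g := by
        rw [integral_add hlin (hW2int.mul_const g), integral_add (integrable_const 1)
          (hWint.const_mul t), integral_const_mul, integral_mul_const, hmean]
        simp
    _ ≤ v * g + 1 := by linarith [mul_le_mul_of_nonneg_right hvar hg]
    _ ≤ Real.exp (v / q ^ 2 * (Real.exp (t * q) - 1 - t * q)) := by
        rw [div_mul_comm, mul_comm]
        exact Real.add_one_le_exp _

variable [IsProbabilityMeasure P] {ι : Type*} {Z : ι → Ω → ℝ} {q v ε : ℝ}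

theorem measureReal_sum_ge_le_bennett (hmeas : ∀ i, Measurable (Z i)) (hindep : iIndepFun Z P)
    (s : Finset ι) (hq : 0 < q) (hε : 0 < ε) (hbd : ∀ i ∈ s, ∀ᵐ ω ∂P, |Z i ω| ≤ q)
    (hmean : ∀ i ∈ s, ∫ ω, Z i ω ∂P = 0) (hvar : ∀ i ∈ s, ∫ ω, Z i ω ^ 2 ∂P ≤ v) :
    P.real {ω | #s * v * ε / q ≤ ∑ i ∈ s, Z i ω} ≤ Real.exp (-(#s * v / q ^ 2) * tau ε) := by
  -- the minimiser of the Chernoff exponent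
  set t := Real.log (1 + ε) / q
  have ht : 0 < t := div_pos (Real.log_pos (by linarith)) hq
  have htq : t * q = Real.log (1 + ε) := div_mul_cancel₀ _ hq.ne'
  have hmgf :
      mgf (∑ i ∈ s, Z i) P t ≤ Real.exp (#s * (v / q ^ 2 * (ε - Real.log (1 + ε)))) := by
    rw [hindep.mgf_sum hmeas]
    calc ∏ i ∈ s, mgf (Z i) P t
        ≤ ∏ _i ∈ s, Real.exp (v / q ^ 2 * (Real.exp (t * q) - 1 - t * q)) :=
          prod_le_prod (fun _ _ => mgf_nonneg) fun i hi =>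
            mgf_le_exp_bennett (hmeas i).aemeasurable hq ht (hbd i hi) (hmean i hi) (hvar i hi)
      _ = _ := by
          rw [prod_const, ← Real.exp_nat_mul, htq, Real.exp_log (by linarith)]
          ring_nf
  have hint := hindep.integrable_exp_mul_sum hmeas fun i hi =>
    integrable_exp_mul_of_ae_abs_le (hmeas i).aemeasurable (hbd i hi) t
  calc P.real {ω | #s * v * ε / q ≤ ∑ i ∈ s, Z i ω}
      ≤ Real.exp (-t * (#s * v * ε / q)) * mgf (∑ i ∈ s, Z i) P t := by
        simpa only [Finset.sum_apply] using measure_ge_le_exp_mul_mgf _ ht.le hint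
    _ ≤ Real.exp (-t * (#s * v * ε / q)) *
          Real.exp (#s * (v / q ^ 2 * (ε - Real.log (1 + ε)))) := by gcongr
    _ = Real.exp (-(#s * v / q ^ 2) * tau ε) := by
        rw [← Real.exp_add, tau]
        congr 1
        simp only [t]
        field_simp
        ring

theorem measure_abs_sum_ge_le_bennett (hmeas : ∀ i, Measurable (Z i)) (hindep : iIndepFun Z P)
    (s : Finset ι) (hq : 0 < q) (hε : 0 < ε) (hbd : ∀ i ∈ s, ∀ᵐ ω ∂P, |Z i ω| ≤ q)
    (hmean : ∀ i ∈ s, ∫ ω, Z i ω ∂P = 0) (hvar : ∀ i ∈ s, ∫ ω, Z i ω ^ 2 ∂P ≤ v) :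
    P {ω | #s * v * ε / q ≤ |∑ i ∈ s, Z i ω|} ≤
      ENNReal.ofReal (2 * Real.exp (-(#s * v / q ^ 2) * tau ε)) := by
  have hupper := measureReal_sum_ge_le_bennett hmeas hindep s hq hε hbd hmean hvar
  have hlower := measureReal_sum_ge_le_bennett (Z := fun i ω => -Z i ω)
    (fun i => (hmeas i).neg) (hindep.comp (fun _ => Neg.neg) fun _ => measurable_neg) s hq hε
    (by simpa only [abs_neg] using hbd) (by simpa only [integral_neg, neg_eq_zero] using hmean)
    (by simpa only [neg_sq] using hvar)
  calc P {ω | #s * v * ε / q ≤ |∑ i ∈ s, Z i ω|}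
      ≤ P ({ω | #s * v * ε / q ≤ ∑ i ∈ s, Z i ω} ∪ {ω | #s * v * ε / q ≤ ∑ i ∈ s, -Z i ω}) :=
        measure_mono fun ω hω => by
          simpa only [mem_union, mem_ofPred_eq, sum_neg_distrib] using le_abs.mp hω.out
    _ ≤ ENNReal.ofReal (P.real {ω | #s * v * ε / q ≤ ∑ i ∈ s, Z i ω} +
          P.real {ω | #s * v * ε / q ≤ ∑ i ∈ s, -Z i ω}) := by
        rw [ENNReal.ofReal_add measureReal_nonneg measureReal_nonneg, ofReal_measureReal,
          ofReal_measureReal]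
        exact measure_union_le _ _
    _ ≤ ENNReal.ofReal (2 * Real.exp (-(#s * v / q ^ 2) * tau ε)) := by
        gcongr
        linarith

end ProbabilityTheory

section DistribFun

variable {Ω : Type*} [MeasurableSpace Ω]

def IsDistribFun (P : Measure Ω) (ξ : Ω → ℝ) (F : ℝ → ℝ) : Prop :=
  ∀ y, (P {ω | ξ ω ≤ y}).toReal = F y

variable {P : Measure Ω} {ξ : Ω → ℝ} {F : ℝ → ℝ}

lemma IsDistribFun.mem_Icc [IsProbabilityMeasure P] (hF : IsDistribFun P ξ F) (y : ℝ) :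
    F y ∈ Set.Icc 0 1 := by
  rw [← hF y]
  exact ⟨ENNReal.toReal_nonneg, ENNReal.toReal_le_of_le_ofReal zero_le_one (by simp [prob_le_one])⟩

lemma IsDistribFun.apply_one [IsProbabilityMeasure P] (hF : IsDistribFun P ξ F)
    (hξ : Measurable ξ) (hle : ∀ᵐ ω ∂P, ξ ω ≤ 1) : F 1 = 1 := by
  rw [← hF 1, (ae_iff_measure_eq (measurableSet_le hξ measurable_const).nullMeasurableSet).mp hle,
    measure_univ, ENNReal.toReal_one]

lemma IsDistribFun.apply_zero (hF : IsDistribFun P ξ F) (hnonneg : ∀ᵐ ω ∂P, 0 ≤ ξ ω)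
    (hFcont : ContinuousWithinAt F (Iio 0) 0) : F 0 = 0 := by
  have hneg : ∀ y < 0, F y = 0 := fun y hy => by
    rw [← hF y, measure_eq_zero_iff_ae_notMem.mpr (hnonneg.mono fun ω h => by
      simp only [mem_ofPred_eq, not_le]; linarith), ENNReal.toReal_zero]
  exact tendsto_nhds_unique hFcont
    (tendsto_const_nhds.congr' (eventually_nhdsWithin_of_forall fun y hy => (hneg y hy).symm))

lemma IsDistribFun.ae_pos [IsFiniteMeasure P] (hF : IsDistribFun P ξ F) (hF0 : F 0 = 0) :
    ∀ᵐ ω ∂P, 0 < ξ ω := by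
  have h : P {ω | ξ ω ≤ 0} = 0 :=
    ((ENNReal.toReal_eq_zero_iff _).mp ((hF 0).trans hF0)).resolve_right (measure_ne_top _ _)
  filter_upwards [measure_eq_zero_iff_ae_notMem.mp h] with ω hω
  simpa using hω

lemma IsDistribFun.ae_mem_Ioc [IsFiniteMeasure P] (hF : IsDistribFun P ξ F)
    (hval : ∀ᵐ ω ∂P, ξ ω ∈ Set.Icc 0 1) (hFcont : ContinuousWithinAt F (Iio 0) 0) :
    ∀ᵐ ω ∂P, ξ ω ∈ Set.Ioc 0 1 := by
  filter_upwards [hF.ae_pos (hF.apply_zero (hval.mono fun _ h => h.1) hFcont), hval]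
    with ω hpos hle
  exact ⟨hpos, hle.2⟩

lemma integrable_ite_le [IsFiniteMeasure P] (hξ : Measurable ξ) (c : ℝ) :
    Integrable (fun ω => if ξ ω ≤ c then (1 : ℝ) else 0) P :=
  .of_bound (Measurable.ite (measurableSet_le hξ measurable_const) measurable_const
    measurable_const).aestronglyMeasurable 1 (ae_of_all _ fun ω => by split_ifs <;> simp)

lemma IsDistribFun.integral_ite_le (hF : IsDistribFun P ξ F) (hξ : Measurable ξ) (c : ℝ) :
    ∫ ω, (if ξ ω ≤ c then (1 : ℝ) else 0) ∂P = F c := by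
  have h : (fun ω => if ξ ω ≤ c then (1 : ℝ) else 0) = {ω | ξ ω ≤ c}.indicator 1 := by
    ext ω; simp [Set.indicator_apply]
  rw [h, integral_indicator_one (measurableSet_le hξ measurable_const), measureReal_def, hF]

lemma ite_le_sub_sq (a b c : ℝ) :
    ((if a ≤ b then (1 : ℝ) else 0) - c) ^ 2 = (if a ≤ b then 1 else 0) * (1 - 2 * c) + c ^ 2 := by
  split_ifs <;> ring

lemma integrable_ite_le_sub_sq [IsFiniteMeasure P] (hξ : Measurable ξ) (c a : ℝ) :
    Integrable (fun ω => ((if ξ ω ≤ c then (1 : ℝ) else 0) - a) ^ 2) P := by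
  simp_rw [ite_le_sub_sq]
  exact ((integrable_ite_le hξ _).mul_const _).add (integrable_const _)

lemma IsDistribFun.integral_ite_le_sub_sq [IsProbabilityMeasure P] (hF : IsDistribFun P ξ F)
    (hξ : Measurable ξ) (c : ℝ) :
    ∫ ω, ((if ξ ω ≤ c then (1 : ℝ) else 0) - F c) ^ 2 ∂P = F c * (1 - F c) := by
  simp_rw [ite_le_sub_sq]
  rw [integral_add ((integrable_ite_le hξ c).mul_const _) (integrable_const _),
    integral_mul_const, hF.integral_ite_le hξ, integral_const, probReal_univ, one_smul]
  ring

end DistribFun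

theorem Finset.sum_range_succ_eq_add_sum_Ioo_add {M : Type*} [AddCommMonoid M] (f : ℕ → M)
    {m : ℕ} (hm : 0 < m) : ∑ k ∈ range (m + 1), f k = f 0 + ∑ k ∈ Ioo 0 m, f k + f m := by
  rw [sum_range_succ, range_eq_Ico, ← Ioo_insert_left hm, sum_insert left_notMem_Ioo]

lemma bern_nonneg (m k : ℕ) {x : ℝ} (hx : x ∈ Set.Icc 0 1) : 0 ≤ bern m k x := by
  have := hx.1
  have : 0 ≤ 1 - x := sub_nonneg.mpr hx.2
  unfold bern
  positivity

lemma sum_bern (m : ℕ) (x : ℝ) : ∑ k ∈ range (m + 1), bern m k x = 1 := by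
  calc ∑ k ∈ range (m + 1), bern m k x
      = ∑ k ∈ range (m + 1), x ^ k * (1 - x) ^ (m - k) * m.choose k :=
        sum_congr rfl fun k _ => by unfold bern; ring
    _ = 1 := by rw [← add_pow, add_sub_cancel, one_pow]

lemma sum_Ioo_bern {m : ℕ} (hm : 0 < m) (x : ℝ) :
    ∑ k ∈ Ioo 0 m, bern m k x = 1 - x ^ m - (1 - x) ^ m := by
  have h := sum_bern m x
  rw [sum_range_succ_eq_add_sum_Ioo_add _ hm] at h
  simp only [bern, Nat.choose_zero_right, Nat.choose_self, Nat.cast_one, pow_zero, one_mul,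
    Nat.sub_zero, Nat.sub_self, mul_one] at h ⊢
  linarith

lemma one_sub_pow_sub_pow_pos {m : ℕ} (hm : 2 ≤ m) {x : ℝ} (hx : x ∈ Set.Ioo 0 1) :
    0 < 1 - x ^ m - (1 - x) ^ m := by
  have h1 : x ^ m ≤ x ^ 2 := pow_le_pow_of_le_one hx.1.le hx.2.le hm
  have h2 : (1 - x) ^ m ≤ (1 - x) ^ 2 :=
    pow_le_pow_of_le_one (by linarith [hx.2]) (by linarith [hx.1]) hm
  nlinarith [mul_pos hx.1 (sub_pos.mpr hx.2)]

lemma natCast_mul_empY {Ω : Type*} (n : ℕ) (X : Fin n → Ω → ℝ) (c : ℝ) (ω : Ω) :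
    n * empY n X c ω = ∑ r, if X r ω ≤ c then (1 : ℝ) else 0 := by
  rcases n.eq_zero_or_pos with rfl | hn
  · simp
  · rw [empY, ← mul_assoc, mul_one_div_cancel (by positivity), one_mul]

noncomputable def bernIncrement (F : ℝ → ℝ) (m : ℕ) (x u : ℝ) : ℝ :=
  ∑ k ∈ range (m + 1), ((if u ≤ (k : ℝ) / m then 1 else 0) - F (k / m)) * bern m k x

section bernIncrement

variable {F : ℝ → ℝ} {m : ℕ} {x u : ℝ}

lemma measurable_bernIncrement : Measurable (bernIncrement F m x) :=
  Finset.measurable_sum _ fun _ _ => ((Measurable.ite measurableSet_Iic measurable_const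
    measurable_const).sub_const _).mul_const _

lemma sum_bernIncrement {Ω : Type*} (n : ℕ) (X : Fin n → Ω → ℝ) (ω : Ω) :
    ∑ r, bernIncrement F m x (X r ω) = n * (BY m n X ω x - Bpoly m F x) := by
  simp only [bernIncrement, BY, Bpoly]
  rw [sum_comm, mul_sub, mul_sum, mul_sum, ← sum_sub_distrib]
  refine sum_congr rfl fun k _ => ?_
  rw [← sum_mul, sum_sub_distrib, ← natCast_mul_empY, sum_const, card_univ, Fintype.card_fin,
    nsmul_eq_mul]
  ring

lemma bernIncrement_eq_sum_Ioo (hm : 0 < m) (hF0 : F 0 = 0) (hF1 : F 1 = 1)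
    (hu : u ∈ Set.Ioc 0 1) :
    bernIncrement F m x u =
      ∑ k ∈ Ioo 0 m, ((if u ≤ (k : ℝ) / m then 1 else 0) - F (k / m)) * bern m k x := by
  rw [bernIncrement, sum_range_succ_eq_add_sum_Ioo_add _ hm]
  simp [hm.ne', hF0, hF1, hu.1.not_ge, hu.2]

lemma abs_bernIncrement_le (hm : 0 < m) (hF : ∀ y, F y ∈ Set.Icc 0 1) (hF0 : F 0 = 0)
    (hF1 : F 1 = 1) (hx : x ∈ Set.Icc 0 1) (hu : u ∈ Set.Ioc 0 1) :
    |bernIncrement F m x u| ≤ 1 - x ^ m - (1 - x) ^ m := by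
  rw [bernIncrement_eq_sum_Ioo hm hF0 hF1 hu, ← sum_Ioo_bern hm]
  refine (abs_sum_le_sum_abs _ _).trans (sum_le_sum fun k _ => ?_)
  rw [abs_mul, abs_of_nonneg (bern_nonneg m k hx)]
  refine mul_le_of_le_one_left (bern_nonneg m k hx) ?_
  have := hF (k / m)
  split_ifs <;> rw [abs_le] <;> constructor <;> linarith [this.1, this.2]

lemma sq_bernIncrement_le (hm : 0 < m) (hF0 : F 0 = 0) (hF1 : F 1 = 1) (hx : x ∈ Set.Icc 0 1)
    (hu : u ∈ Set.Ioc 0 1) :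
    bernIncrement F m x u ^ 2 ≤ (1 - x ^ m - (1 - x) ^ m) *
      ∑ k ∈ Ioo 0 m, ((if u ≤ (k : ℝ) / m then 1 else 0) - F (k / m)) ^ 2 * bern m k x := by
  rw [bernIncrement_eq_sum_Ioo hm hF0 hF1 hu, ← sum_Ioo_bern hm]
  exact sum_sq_le_sum_mul_sum_of_sq_le_mul _ (fun k _ => bern_nonneg m k hx)
    (fun k _ => mul_nonneg (sq_nonneg _) (bern_nonneg m k hx)) fun k _ => le_of_eq (by ring)

variable {Ω : Type*} [MeasurableSpace Ω] {P : Measure Ω} [IsProbabilityMeasure P] {ξ : Ω → ℝ}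

lemma IsDistribFun.integral_bernIncrement (hF : IsDistribFun P ξ F) (hξ : Measurable ξ) :
    ∫ ω, bernIncrement F m x (ξ ω) ∂P = 0 := by
  simp only [bernIncrement]
  rw [integral_finsetSum _ fun k _ =>
    Integrable.mul_const (by exact (integrable_ite_le hξ _).sub (integrable_const _)) _]
  refine sum_eq_zero fun k _ => ?_
  rw [integral_mul_const, integral_sub (integrable_ite_le hξ _) (integrable_const _),
    hF.integral_ite_le hξ, integral_const, probReal_univ, one_smul, sub_self, zero_mul]

lemma IsDistribFun.ae_abs_bernIncrement_le (hF : IsDistribFun P ξ F) (hm : 0 < m)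
    (hξ : Measurable ξ) (hval : ∀ᵐ ω ∂P, ξ ω ∈ Set.Icc 0 1)
    (hFcont : ContinuousWithinAt F (Iio 0) 0) (hx : x ∈ Set.Icc 0 1) :
    ∀ᵐ ω ∂P, |bernIncrement F m x (ξ ω)| ≤ 1 - x ^ m - (1 - x) ^ m := by
  have hF0 := hF.apply_zero (hval.mono fun _ h => h.1) hFcont
  have hF1 := hF.apply_one hξ (hval.mono fun _ h => h.2)
  filter_upwards [hF.ae_mem_Ioc hval hFcont] with ω hω
  exact abs_bernIncrement_le hm hF.mem_Icc hF0 hF1 hx hω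

lemma IsDistribFun.integral_sq_bernIncrement_le (hF : IsDistribFun P ξ F) (hm : 0 < m)
    (hξ : Measurable ξ) (hval : ∀ᵐ ω ∂P, ξ ω ∈ Set.Icc 0 1)
    (hFcont : ContinuousWithinAt F (Iio 0) 0) (hx : x ∈ Set.Icc 0 1) :
    ∫ ω, bernIncrement F m x (ξ ω) ^ 2 ∂P ≤
      (1 - x ^ m - (1 - x) ^ m) * Bpoly m (fun y => F y * (1 - F y)) x := by
  have hF0 := hF.apply_zero (hval.mono fun _ h => h.1) hFcont
  have hF1 := hF.apply_one hξ (hval.mono fun _ h => h.2)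
  have hq : 0 ≤ 1 - x ^ m - (1 - x) ^ m :=
    sum_Ioo_bern hm x ▸ sum_nonneg fun k _ => bern_nonneg m k hx
  calc ∫ ω, bernIncrement F m x (ξ ω) ^ 2 ∂P
      ≤ ∫ ω, (1 - x ^ m - (1 - x) ^ m) * ∑ k ∈ Ioo 0 m,
          ((if ξ ω ≤ (k : ℝ) / m then 1 else 0) - F (k / m)) ^ 2 * bern m k x ∂P := by
        refine integral_mono_of_nonneg (ae_of_all _ fun ω => sq_nonneg _)
          ((integrable_finsetSum _ fun k _ =>
            (integrable_ite_le_sub_sq hξ _ _).mul_const _).const_mul _) ?_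
        filter_upwards [hF.ae_mem_Ioc hval hFcont] with ω hω
        exact sq_bernIncrement_le hm hF0 hF1 hx hω
    _ = (1 - x ^ m - (1 - x) ^ m) *
          ∑ k ∈ Ioo 0 m, F (k / m) * (1 - F (k / m)) * bern m k x := by
        rw [integral_const_mul, integral_finsetSum _ fun k _ =>
          (integrable_ite_le_sub_sq hξ _ _).mul_const _]
        simp_rw [integral_mul_const, hF.integral_ite_le_sub_sq hξ]
    _ ≤ (1 - x ^ m - (1 - x) ^ m) * Bpoly m (fun y => F y * (1 - F y)) x := by
        gcongr
        refine sum_le_sum_of_subset_of_nonneg (fun k hk => mem_range.mpr (by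
          have := (mem_Ioo.mp hk).2; omega)) fun k _ _ => ?_
        have := hF.mem_Icc (k / m)
        exact mul_nonneg (mul_nonneg this.1 (by linarith [this.2])) (bern_nonneg m k hx)

end bernIncrement

theorem pointwise_concentration_general
    {Ω : Type*} [MeasurableSpace Ω] (P : Measure Ω) [IsProbabilityMeasure P]
    (n : ℕ) (X : Fin n → Ω → ℝ)
    (hmeas : ∀ r, Measurable (X r))
    (hindep : iIndepFun X P)
    (hval : ∀ r ω, X r ω ∈ Set.Icc (0:ℝ) 1)
    (F : ℝ → ℝ) (hFcont : Continuous F)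
    (hcdf : ∀ r y, (P {ω | X r ω ≤ y}).toReal = F y)
    (m : ℕ) (hm : 2 ≤ m)
    (x : ℝ) (hx : x ∈ Set.Ioo (0:ℝ) 1) (ε : ℝ) (hε : 0 < ε) :
    P {ω | |BY m n X ω x - F x| ≥
        ε * Bpoly m (fun y => F y * (1 - F y)) x + |Bpoly m F x - F x|} ≤
      ENNReal.ofReal (2 * Real.exp (-((n : ℝ) / (1 - x ^ m - (1 - x) ^ m)) *
        Bpoly m (fun y => F y * (1 - F y)) x * tau ε)) := by
  set σ := Bpoly m (fun y => F y * (1 - F y)) x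
  set q := 1 - x ^ m - (1 - x) ^ m
  have hq : 0 < q := one_sub_pow_sub_pow_pos hm hx
  have hm0 : 0 < m := by omega
  have hxI : x ∈ Set.Icc 0 1 := Ioo_subset_Icc_self hx
  have hF (r : Fin n) : IsDistribFun P (X r) F := hcdf r
  have hval' (r : Fin n) : ∀ᵐ ω ∂P, X r ω ∈ Set.Icc 0 1 := ae_of_all _ (hval r)
  have hbennett := measure_abs_sum_ge_le_bennett (v := q * σ)
    (fun r => measurable_bernIncrement.comp (hmeas r))
    (hindep.comp _ fun _ => measurable_bernIncrement) univ hq hε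
    (fun r _ => (hF r).ae_abs_bernIncrement_le hm0 (hmeas r) (hval' r)
      hFcont.continuousWithinAt hxI)
    (fun r _ => (hF r).integral_bernIncrement (hmeas r))
    (fun r _ => (hF r).integral_sq_bernIncrement_le hm0 (hmeas r) (hval' r)
      hFcont.continuousWithinAt hxI)
  rw [card_univ, Fintype.card_fin] at hbennett
  refine (measure_mono fun ω hω => ?_).trans (hbennett.trans_eq ?_)
  · have hdev : ε * σ ≤ |BY m n X ω x - Bpoly m F x| := by
      have := abs_sub_abs_le_abs_sub (BY m n X ω x - F x) (Bpoly m F x - F x)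
      rw [sub_sub_sub_cancel_right] at this
      linarith [hω.out]
    change _ ≤ |∑ r, bernIncrement F m x (X r ω)|
    rw [sum_bernIncrement, abs_mul, Nat.abs_cast,
      show (n : ℝ) * (q * σ) * ε / q = n * (ε * σ) by field_simp]
    gcongr
  · congr 2
    field_simp

theorem pointwise_concentration
    {Ω : Type*} [MeasurableSpace Ω] (P : Measure Ω) [IsProbabilityMeasure P]
    (n : ℕ) (hn : 2 ≤ n) (X : Fin n → Ω → ℝ)
    (hmeas : ∀ r, Measurable (X r))
    (hindep : iIndepFun X P)
    (hval : ∀ r ω, X r ω ∈ Set.Icc (0:ℝ) 1)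
    (F : ℝ → ℝ) (hFcont : Continuous F)
    (hcdf : ∀ r y, (P {ω | X r ω ≤ y}).toReal = F y)
    (hFpos : ∀ y ∈ Set.Ioo (0:ℝ) 1, 0 < F y ∧ F y < 1)
    (m : ℕ) (hm : 2 ≤ m)
    (x : ℝ) (hx : x ∈ Set.Ioo (0:ℝ) 1) (ε : ℝ) (hε : 0 < ε) :
    P {ω | |BY m n X ω x - F x| ≥
        ε * Bpoly m (fun y => F y * (1 - F y)) x + |Bpoly m F x - F x|} ≤
      ENNReal.ofReal (2 * Real.exp (-((n : ℝ) / (1 - x ^ m - (1 - x) ^ m)) *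
        Bpoly m (fun y => F y * (1 - F y)) x * tau ε)) :=
  pointwise_concentration_general P n X hmeas hindep hval F hFcont hcdf m hm x hx ε hε
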